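/- arXiv:0802.0467 — 3 statements merged into one kernel-verified Lean document; each statement's English description precedes it below -/
import Mathlib

section
/- Let X be a subset of a metric space, let z be a point, let p ∈ X be a point with d(z,p) = dist(z,X), and let [z,p] be a geodesic from z to p (a minimal length geodesic from z to X). Then for every K ≥ 0, the intersection of the K-neighbourhood of X with the K-neighbourhood of [z,p] is contained in the 3K-neighbourhood of p. -/
open Metric Set

/-- `G` is a geodesic segment from `x` to `y`: the image of an isometric embedding of
the interval `[0, dist x y]` sending the endpoints to `x` and `y`. -/
def IsGeodesic {X : Type*} [MetricSpace X] (G : Set X) (x y : X) : Prop :=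
  ∃ f : ℝ → X, f 0 = x ∧ f (dist x y) = y ∧
    (∀ s ∈ Set.Icc (0 : ℝ) (dist x y), ∀ t ∈ Set.Icc (0 : ℝ) (dist x y),
      dist (f s) (f t) = |s - t|) ∧
    f '' Set.Icc (0 : ℝ) (dist x y) = G

/-- The closed `K`-neighbourhood of a set `S`: all points within distance `K` of `S`. -/
def nbhd {X : Type*} [MetricSpace X] (K : ℝ) (S : Set X) : Set X :=
  {w | Metric.infDist w S ≤ K}

/-- The space is geodesic: any two points are joined by a geodesic segment. -/
def GeodesicSpace (X : Type*) [MetricSpace X] : Prop :=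
  ∀ x y : X, ∃ G : Set X, IsGeodesic G x y

/-- Every geodesic triangle is `δ`-slim: each side is contained in the
`δ`-neighbourhood of the union of the other two sides. -/
def SlimTriangles (δ : ℝ) (X : Type*) [MetricSpace X] : Prop :=
  ∀ (x y z : X) (Gxy Gyz Gzx : Set X),
    IsGeodesic Gxy x y → IsGeodesic Gyz y z → IsGeodesic Gzx z x →
    Gxy ⊆ nbhd δ (Gyz ∪ Gzx)

/-- `p` is a nearest point on `S` to `z`. -/
def NearestPoint {X : Type*} [MetricSpace X] (S : Set X) (z p : X) : Prop :=
  p ∈ S ∧ dist z p = Metric.infDist z S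

/-- The halfspace `H(a,b)`: points at least as close to `b` as to `a`. -/
def Halfspace {X : Type*} [MetricSpace X] (a b : X) : Set X :=
  {w | dist w b ≤ dist w a}

/-- Let X be a subset of a metric space, let z be a point, let p ∈ X with
d(z,p) = dist(z,X), and let [z,p] be a minimal length geodesic from z to X. Then for
every K ≥ 0, the intersection of the K-neighbourhoods of X and of [z,p] is contained
in the 3K-neighbourhood of p. -/
theorem stmt_0 {X : Type*} [MetricSpace X] (hGeo : GeodesicSpace X)
    (S : Set X) (z p : X) (hpS : p ∈ S) (hpd : dist z p = Metric.infDist z S)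
    (G : Set X) (hG : IsGeodesic G z p) :
    ∀ K : ℝ, 0 ≤ K → nbhd K S ∩ nbhd K G ⊆ Metric.closedBall p (3 * K) := by
  intro K hK w ⟨hwS, hwG⟩
  obtain ⟨f, hf0, hfd, hiso, hfim⟩ := hG
  have hd0 : (0:ℝ) ≤ dist z p := dist_nonneg
  -- G is compact and nonempty
  have hlip : LipschitzOnWith 1 f (Set.Icc 0 (dist z p)) := by
    intro s hs t ht
    rw [edist_dist, hiso s hs t ht]
    simp [edist_dist, Real.dist_eq]
  have hGc : IsCompact G := by
    rw [← hfim]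
    exact (isCompact_Icc).image_of_continuousOn hlip.continuousOn
  have hGne : G.Nonempty := ⟨p, by rw [← hfim]; exact ⟨dist z p, ⟨hd0, le_refl _⟩, hfd⟩⟩
  obtain ⟨g, hgG, hgd⟩ := hGc.exists_infDist_eq_dist hGne w
  obtain ⟨t, ht, hft⟩ := by rw [← hfim] at hgG; exact hgG
  have hwg : dist w g ≤ K := by rw [← hgd]; exact hwG
  have hzg : dist z g = t := by
    have h := hiso 0 ⟨le_refl _, hd0⟩ t ht
    rw [hf0, hft] at h
    rw [h]
    simp [abs_of_nonneg ht.1]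
  have hgp : dist g p = dist z p - t := by
    have h := hiso t ht (dist z p) ⟨hd0, le_refl _⟩
    rw [hft, hfd] at h
    rw [h, abs_of_nonpos (by linarith [ht.2])]; ring
  have key : dist w p ≤ 3 * K := by
    refine le_of_forall_pos_le_add fun ε hε => ?_
    have hSne : S.Nonempty := ⟨p, hpS⟩
    have : Metric.infDist w S < K + ε := lt_of_le_of_lt hwS (by linarith)
    obtain ⟨x, hxS, hwx⟩ := (Metric.infDist_lt_iff hSne).mp this
    have h1 : dist z p ≤ dist z x := hpd ▸ Metric.infDist_le_dist_of_mem hxS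
    have h2 : dist z x ≤ dist z g + dist g w + dist w x := by
      calc dist z x ≤ dist z g + dist g x := dist_triangle _ _ _
        _ ≤ dist z g + (dist g w + dist w x) := by linarith [dist_triangle g w x]
        _ = _ := by ring
    have h3 : dist g w ≤ K := by rwa [dist_comm]
    have h4 : dist w p ≤ dist w g + dist g p := dist_triangle _ _ _
    rw [hgp] at h4
    rw [hzg] at h2
    linarith
  exact Metric.mem_closedBall.mpr key
end

section
/- Let [x,y] be a geodesic, let p be a nearest point on [x,y] to a point a, and let q be a nearest point on [x,y] to a point b. If d(p,q) > 14δ, then d(a,b) ≥ d(a,p) + d(p,q) + d(q,b) − 24δ. -/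
open Metric Set

lemma IsGeodesic.compact {X : Type*} [MetricSpace X] {G : Set X} {x y : X} (h : IsGeodesic G x y) : IsCompact G := by
  obtain ⟨f, hf0, hfL, hiso, himg⟩ := h
  rw [← himg]
  refine isCompact_Icc.image_of_continuousOn ?_
  refine (LipschitzOnWith.of_dist_le_mul (K := 1) ?_).continuousOn
  intro s hs t ht
  rw [hiso s hs t ht, Real.dist_eq]
  norm_num

lemma IsGeodesic.left_mem {X : Type*} [MetricSpace X] {G : Set X} {x y : X} (h : IsGeodesic G x y) : x ∈ G := by
  obtain ⟨f, hf0, hfL, hiso, himg⟩ := h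
  rw [← himg]
  exact ⟨0, ⟨le_refl _, dist_nonneg⟩, hf0⟩

lemma IsGeodesic.dist_add {X : Type*} [MetricSpace X] {G : Set X} {x y : X} (h : IsGeodesic G x y) {z : X} (hz : z ∈ G) :
    dist x z + dist z y = dist x y := by
  obtain ⟨f, hf0, hfL, hiso, himg⟩ := h
  rw [← himg] at hz
  obtain ⟨r, hr, rfl⟩ := hz
  have h0 : (0:ℝ) ∈ Icc (0:ℝ) (dist x y) := ⟨le_refl _, dist_nonneg⟩
  have hL : dist x y ∈ Icc (0:ℝ) (dist x y) := ⟨dist_nonneg, le_refl _⟩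
  have e1 : dist x (f r) = r := by
    rw [← hf0, hiso 0 h0 r hr, abs_of_nonpos (by linarith [hr.1])]; ring
  have e2 : dist (f r) y = dist x y - r := by
    conv_lhs => rw [← hfL]
    rw [hiso r hr _ hL, abs_of_nonpos (by linarith [hr.2])]; ring
  rw [e1, e2]; ring

lemma IsGeodesic.exists_point_at {X : Type*} [MetricSpace X] {G : Set X} {x y : X} (h : IsGeodesic G x y) {r : ℝ}
    (hr : r ∈ Icc (0:ℝ) (dist x y)) :
    ∃ z ∈ G, dist x z = r ∧ dist z y = dist x y - r := by
  obtain ⟨f, hf0, hfL, hiso, himg⟩ := h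
  refine ⟨f r, by rw [← himg]; exact ⟨r, hr, rfl⟩, ?_, ?_⟩
  · rw [← hf0, hiso 0 ⟨le_refl _, dist_nonneg⟩ r hr, abs_of_nonpos (by linarith [hr.1])]; ring
  · conv_lhs => rw [← hfL]
    rw [hiso r hr _ ⟨dist_nonneg, le_refl _⟩, abs_of_nonpos (by linarith [hr.2])]; ring

lemma IsGeodesic.subgeodesic {X : Type*} [MetricSpace X] {G : Set X} {x y : X} (h : IsGeodesic G x y) {p q : X}
    (hp : p ∈ G) (hq : q ∈ G) : ∃ G' : Set X, G' ⊆ G ∧ IsGeodesic G' p q := by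
  obtain ⟨f, hf0, hfL, hiso, himg⟩ := h
  rw [← himg] at hp hq
  obtain ⟨s, hs, rfl⟩ := hp
  obtain ⟨t, ht, rfl⟩ := hq
  rcases le_total s t with hst | hst
  · have hd : dist (f s) (f t) = t - s := by
      rw [hiso s hs t ht, abs_of_nonpos (by linarith)]; ring
    refine ⟨f '' Icc s t, ?_, fun r => f (s + r), by simp, ?_, ?_, ?_⟩
    · rw [← himg]; exact image_mono (f := f) (Icc_subset_Icc hs.1 ht.2)
    · rw [hd]; norm_num
    · intro r1 hr1 r2 hr2
      rw [hd] at hr1 hr2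
      have m1 : s + r1 ∈ Icc (0:ℝ) (dist x y) := ⟨by linarith [hs.1, hr1.1], by linarith [hr1.2, ht.2]⟩
      have m2 : s + r2 ∈ Icc (0:ℝ) (dist x y) := ⟨by linarith [hs.1, hr2.1], by linarith [hr2.2, ht.2]⟩
      rw [hiso _ m1 _ m2]; congr 1; ring
    · rw [hd]
      have : (fun r => s + r) '' Icc (0:ℝ) (t - s) = Icc s t := by
        rw [image_const_add_Icc]; norm_num
      calc (fun r => f (s + r)) '' Icc (0:ℝ) (t - s)
          = f '' ((fun r => s + r) '' Icc (0:ℝ) (t - s)) := by rw [image_image]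
        _ = f '' Icc s t := by rw [this]
  · have hd : dist (f s) (f t) = s - t := by
      rw [hiso s hs t ht, abs_of_nonneg (by linarith)]
    refine ⟨f '' Icc t s, ?_, fun r => f (s - r), by simp, ?_, ?_, ?_⟩
    · rw [← himg]; exact image_mono (f := f) (Icc_subset_Icc ht.1 hs.2)
    · rw [hd]; norm_num
    · intro r1 hr1 r2 hr2
      rw [hd] at hr1 hr2
      have m1 : s - r1 ∈ Icc (0:ℝ) (dist x y) := ⟨by linarith [hr1.2, ht.1], by linarith [hr1.1, hs.2]⟩
      have m2 : s - r2 ∈ Icc (0:ℝ) (dist x y) := ⟨by linarith [hr2.2, ht.1], by linarith [hr2.1, hs.2]⟩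
      rw [hiso _ m1 _ m2]
      rw [show s - r1 - (s - r2) = -(r1 - r2) by ring, abs_neg]
    · rw [hd]
      have : (fun r => s - r) '' Icc (0:ℝ) (s - t) = Icc t s := by
        rw [image_const_sub_Icc]; norm_num
      calc (fun r => f (s - r)) '' Icc (0:ℝ) (s - t)
          = f '' ((fun r => s - r) '' Icc (0:ℝ) (s - t)) := by rw [image_image]
        _ = f '' Icc t s := by rw [this]

lemma exists_near {X : Type*} [MetricSpace X] {G1 G2 : Set X} {x1 y1 x2 y2 : X}
    (h1 : IsGeodesic G1 x1 y1) (h2 : IsGeodesic G2 x2 y2) {z : X} {δ : ℝ}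
    (hz : z ∈ nbhd δ (G1 ∪ G2)) : ∃ u ∈ G1 ∪ G2, dist z u ≤ δ := by
  have hc : IsCompact (G1 ∪ G2) := h1.compact.union h2.compact
  have hne : (G1 ∪ G2).Nonempty := ⟨x1, Or.inl h1.left_mem⟩
  obtain ⟨u, huS, hu⟩ := hc.exists_infDist_eq_dist hne z
  exact ⟨u, huS, by rw [← hu]; exact hz⟩

/-- Key lemma: if `p` is a nearest point on geodesic `G` to `a` and `m ∈ G`, then
`dist a m ≥ dist a p + dist p m - 4δ`. -/
lemma nearest_lower {X : Type*} [MetricSpace X] (δ : ℝ) (hδ : 0 ≤ δ)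
    (hGeo : GeodesicSpace X) (hyp : SlimTriangles δ X) {x y a : X} {G : Set X}
    (hG : IsGeodesic G x y) {p : X} (hp : NearestPoint G a p) {m : X} (hm : m ∈ G) :
    dist a p + dist p m - 4 * δ ≤ dist a m := by
  have hnear : ∀ w ∈ G, dist a p ≤ dist a w := fun w hw => by
    rw [hp.2]; exact infDist_le_dist_of_mem hw
  by_cases hle : dist p m ≤ 2 * δ
  · linarith [hnear m hm]
  push_neg at hle
  have hmain : ∀ ε : ℝ, 0 < ε → ε ≤ dist p m - 2 * δ →
      dist a p + dist p m - 4 * δ - ε ≤ dist a m := by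
    intro ε hε hεle
    obtain ⟨Gpm, hsub, hGpm⟩ := hG.subgeodesic hp.1 hm
    obtain ⟨z, hzmem, hz1, hz2⟩ := hGpm.exists_point_at (r := 2 * δ + ε)
      ⟨by linarith, by linarith⟩
    obtain ⟨Gma, hGma⟩ := hGeo m a
    obtain ⟨Gap, hGap⟩ := hGeo a p
    obtain ⟨u, huS, huz⟩ := exists_near hGma hGap
      (hyp p m a Gpm Gma Gap hGpm hGma hGap hzmem)
    have haz : dist a p ≤ dist a z := hnear z (hsub hzmem)
    rcases huS with hu | hu
    · -- u on [m,a]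
      have hsum := hGma.dist_add hu
      have t1 : dist m z ≤ dist m u + dist u z := dist_triangle m u z
      have t2 : dist a z ≤ dist a u + dist u z := dist_triangle a u z
      have hdz : dist u z = dist z u := dist_comm u z
      have hmz : dist z m = dist p m - (2*δ+ε) := hz2
      have : dist m z = dist z m := dist_comm m z
      have hma : dist m a = dist a m := dist_comm m a
      have hua : dist u a = dist a u := dist_comm u a
      linarith
    · -- u on [a,p]
      have hsum := hGap.dist_add hu
      have t1 : dist p z ≤ dist p u + dist u z := dist_triangle p u z
      have t2 : dist a z ≤ dist a u + dist u z := dist_triangle a u z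
      have hdz : dist u z = dist z u := dist_comm u z
      have hup : dist u p = dist p u := dist_comm u p
      linarith
  -- pass to the limit
  refine le_of_forall_pos_le_add fun ε hε => ?_
  have hε' : 0 < min ε (dist p m - 2*δ) := lt_min hε (by linarith)
  have := hmain _ hε' (min_le_right _ _)
  have : dist a p + dist p m - 4*δ - ε ≤ dist a m := by
    have h2 : min ε (dist p m - 2*δ) ≤ ε := min_le_left _ _
    linarith
  linarith


/-- Let [x,y] be a geodesic, p a nearest point on [x,y] to a, q a nearest
point on [x,y] to b. If d(p,q) > 14δ then d(a,b) ≥ d(a,p) + d(p,q) + d(q,b) − 24δ. -/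
theorem stmt_3 {X : Type*} [MetricSpace X] (δ : ℝ) (hδ : 0 ≤ δ)
    (hGeo : GeodesicSpace X) (hyp : SlimTriangles δ X)
    (x y a b : X) (Gxy : Set X) (hGxy : IsGeodesic Gxy x y)
    (p q : X) (hp : NearestPoint Gxy a p) (hq : NearestPoint Gxy b q)
    (hpq : 14 * δ < dist p q) :
    dist a p + dist p q + dist q b - 24 * δ ≤ dist a b := by
  obtain ⟨Gpq, hsub, hGpq⟩ := hGxy.subgeodesic hp.1 hq.1
  -- midpoint m of [p,q]
  obtain ⟨m, hmmem, hm1, hm2⟩ := hGpq.exists_point_at (r := dist p q / 2)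
    ⟨by linarith, by linarith⟩
  have hmG : m ∈ Gxy := hsub hmmem
  have hmq : dist m q = dist p q / 2 := by rw [hm2]; ring
  -- lower bounds from key lemma
  have hA : dist a p + dist p m - 4 * δ ≤ dist a m :=
    nearest_lower δ hδ hGeo hyp hGxy hp hmG
  have hB : dist b q + dist q m - 4 * δ ≤ dist b m :=
    nearest_lower δ hδ hGeo hyp hGxy hq hmG
  rw [hm1] at hA
  rw [dist_comm q m, hmq] at hB
  obtain ⟨Gqa, hGqa⟩ := hGeo q a
  obtain ⟨Gap, hGap⟩ := hGeo a p
  obtain ⟨Gab, hGab⟩ := hGeo a b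
  obtain ⟨Gbq, hGbq⟩ := hGeo b q
  -- m is δ-close to [q,a] ∪ [a,p]
  obtain ⟨u, huS, hum⟩ := exists_near hGqa hGap
    (hyp p q a Gpq Gqa Gap hGpq hGqa hGap hmmem)
  rcases huS with hu | hu
  · -- u ∈ [q,a] : apply second slim triangle
    obtain ⟨v, hvS, hvu⟩ := exists_near hGab hGbq
      (hyp q a b Gqa Gab Gbq hGqa hGab hGbq hu)
    have hmv : dist m v ≤ 2 * δ := by
      have := dist_triangle m u v
      linarith
    rcases hvS with hv | hv
    · -- v ∈ [a,b] : conclude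
      have hsum := hGab.dist_add hv
      have t1 : dist a m ≤ dist a v + dist v m := dist_triangle a v m
      have t2 : dist b m ≤ dist b v + dist v m := dist_triangle b v m
      have c1 : dist v m = dist m v := dist_comm v m
      have c2 : dist b v = dist v b := dist_comm b v
      have c3 : dist q b = dist b q := dist_comm q b
      linarith
    · -- v ∈ [b,q] : contradiction
      exfalso
      have hvq : dist v q ≤ dist b q := by
        have := hGbq.dist_add hv
        linarith [dist_nonneg (x := b) (y := v)]
      have t : dist b m ≤ dist b q + dist q v + dist v m + 0 := by
        have t1 : dist b m ≤ dist b v + dist v m := dist_triangle b v m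
        have t2 : dist b v ≤ dist b q + dist q v := dist_triangle b q v
        linarith
      have c1 : dist q v = dist v q := dist_comm q v
      have c2 : dist v m = dist m v := dist_comm v m
      -- v on [b,q] so dist b v ≤ dist b q, and dist b m ≤ dist b v + dist v m ≤ dist b q + 2δ
      have hbv : dist b v ≤ dist b q := by
        have := hGbq.dist_add hv
        linarith [dist_nonneg (x := v) (y := q)]
      have hbm : dist b m ≤ dist b q + 2 * δ := by
        have t1 : dist b m ≤ dist b v + dist v m := dist_triangle b v m
        linarith
      linarith
  · -- u ∈ [a,p] : contradiction
    exfalso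
    have hau : dist a u ≤ dist a p := by
      have := hGap.dist_add hu
      linarith [dist_nonneg (x := u) (y := p)]
    have ham : dist a m ≤ dist a p + δ := by
      have t1 : dist a m ≤ dist a u + dist u m := dist_triangle a u m
      have c : dist u m = dist m u := dist_comm u m
      linarith
    linarith
end

section
/- Let x, y be points, let z ∈ H(x,y), and let p be a nearest point to z on a geodesic [x,y]. Then d(y,p) ≤ (1/2)·d(x,y) + 3δ. Conversely, if p is a nearest point to z on [x,y] and d(y,p) ≤ (1/2)·d(x,y) − 3δ, then z ∈ H(x,y). -/
open Metric Set

section Aux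

variable {X : Type*} [MetricSpace X]

lemma geo_mem_left {G : Set X} {u v : X} (h : IsGeodesic G u v) : u ∈ G := by
  obtain ⟨f, h0, hL, _, himg⟩ := h
  rw [← himg]
  exact ⟨0, ⟨le_refl 0, dist_nonneg⟩, h0⟩

lemma geo_mem_right {G : Set X} {u v : X} (h : IsGeodesic G u v) : v ∈ G := by
  obtain ⟨f, h0, hL, _, himg⟩ := h
  rw [← himg]
  exact ⟨dist u v, ⟨dist_nonneg, le_refl _⟩, hL⟩

lemma geo_nonempty {G : Set X} {u v : X} (h : IsGeodesic G u v) : G.Nonempty :=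
  ⟨u, geo_mem_left h⟩

lemma geo_compact {G : Set X} {u v : X} (h : IsGeodesic G u v) : IsCompact G := by
  obtain ⟨f, h0, hL, hiso, himg⟩ := h
  rw [← himg]
  apply isCompact_Icc.image_of_continuousOn
  refine (LipschitzOnWith.of_dist_le_mul (K := 1) ?_).continuousOn
  intro s hs t ht
  rw [hiso s hs t ht, Real.dist_eq, NNReal.coe_one, one_mul]

lemma geo_dist_add {G : Set X} {u v r : X} (h : IsGeodesic G u v) (hr : r ∈ G) :
    dist u r + dist r v = dist u v := by
  obtain ⟨f, h0, hL, hiso, himg⟩ := h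
  rw [← himg] at hr
  obtain ⟨s, hs, rfl⟩ := hr
  have h1 := hiso 0 ⟨le_refl 0, dist_nonneg⟩ s hs
  have h2 := hiso s hs (dist u v) ⟨dist_nonneg, le_refl _⟩
  rw [h0] at h1
  rw [hL] at h2
  have e1 : |0 - s| = s := by rw [zero_sub, abs_neg, abs_of_nonneg hs.1]
  have e2 : |s - dist u v| = dist u v - s := by
    rw [abs_of_nonpos (by linarith [hs.2])]; ring
  rw [h1, h2, e1, e2]; ring

lemma geo_estimate {δ : ℝ} {G : Set X} {u v w : X} (h : IsGeodesic G u v)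
    (hw : Metric.infDist w G ≤ δ) : dist u w + dist w v ≤ dist u v + 2 * δ := by
  obtain ⟨q, hq, hdq⟩ := (geo_compact h).exists_infDist_eq_dist (geo_nonempty h) w
  have hadd := geo_dist_add h hq
  have hwq : dist w q ≤ δ := by rw [← hdq]; exact hw
  have t1 : dist u w ≤ dist u q + dist q w := dist_triangle u q w
  have t2 : dist w v ≤ dist w q + dist q v := dist_triangle w q v
  have hc : dist q w = dist w q := dist_comm q w
  linarith

end Aux

/-- Let z ∈ H(x,y) and p a nearest point to z on a geodesic [x,y]. Then
d(y,p) ≤ (1/2)d(x,y) + 3δ. Conversely, if p is a nearest point to z on [x,y] and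
d(y,p) ≤ (1/2)d(x,y) − 3δ, then z ∈ H(x,y). -/
theorem stmt_7 {X : Type*} [MetricSpace X] (δ : ℝ) (hδ : 0 ≤ δ)
    (hGeo : GeodesicSpace X) (hyp : SlimTriangles δ X)
    (x y z : X) (Gxy : Set X) (hGxy : IsGeodesic Gxy x y)
    (p : X) (hp : NearestPoint Gxy z p) :
    (z ∈ Halfspace x y → dist y p ≤ (1 / 2) * dist x y + 3 * δ) ∧
    (dist y p ≤ (1 / 2) * dist x y - 3 * δ → z ∈ Halfspace x y) := by
  obtain ⟨Gyz, hGyz⟩ := hGeo y z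
  obtain ⟨Gzx, hGzx⟩ := hGeo z x
  have hslim := hyp x y z Gxy Gyz Gzx hGxy hGyz hGzx
  -- dichotomy: every point of Gxy is δ-close to Gyz or to Gzx
  have dich : ∀ w ∈ Gxy, Metric.infDist w Gyz ≤ δ ∨ Metric.infDist w Gzx ≤ δ := by
    intro w hw
    have h1 : Metric.infDist w (Gyz ∪ Gzx) ≤ δ := hslim hw
    obtain ⟨q, hq, hdq⟩ := ((geo_compact hGyz).union (geo_compact hGzx)).exists_infDist_eq_dist
      ((geo_nonempty hGyz).mono subset_union_left) w
    have hwq : dist w q ≤ δ := by rw [← hdq]; exact h1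
    rcases hq with hq | hq
    · exact Or.inl (le_trans (Metric.infDist_le_dist_of_mem hq) hwq)
    · exact Or.inr (le_trans (Metric.infDist_le_dist_of_mem hq) hwq)
  -- find a point m on Gxy close to both sides, via connectedness
  obtain ⟨f, hf0, hfL, hiso, himg⟩ := hGxy
  have hfc : ContinuousOn f (Set.Icc (0 : ℝ) (dist x y)) := by
    refine (LipschitzOnWith.of_dist_le_mul (K := 1) ?_).continuousOn
    intro s hs t ht
    rw [hiso s hs t ht, Real.dist_eq, NNReal.coe_one, one_mul]
  set A : Set ℝ := Set.Icc (0 : ℝ) (dist x y) ∩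
      (fun t => Metric.infDist (f t) Gyz) ⁻¹' Set.Iic δ with hA_def
  set B : Set ℝ := Set.Icc (0 : ℝ) (dist x y) ∩
      (fun t => Metric.infDist (f t) Gzx) ⁻¹' Set.Iic δ with hB_def
  have hAc : IsClosed A :=
    ContinuousOn.preimage_isClosed_of_isClosed
      ((Metric.continuous_infDist_pt Gyz).comp_continuousOn hfc) isClosed_Icc isClosed_Iic
  have hBc : IsClosed B :=
    ContinuousOn.preimage_isClosed_of_isClosed
      ((Metric.continuous_infDist_pt Gzx).comp_continuousOn hfc) isClosed_Icc isClosed_Iic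
  have hGxy' : IsGeodesic Gxy x y := ⟨f, hf0, hfL, hiso, himg⟩
  have hcover : Set.Icc (0 : ℝ) (dist x y) ⊆ A ∪ B := by
    intro t ht
    have hmem : f t ∈ Gxy := by rw [← himg]; exact ⟨t, ht, rfl⟩
    rcases dich (f t) hmem with h | h
    · exact Or.inl ⟨ht, h⟩
    · exact Or.inr ⟨ht, h⟩
  have hAne : (Set.Icc (0 : ℝ) (dist x y) ∩ A).Nonempty := by
    refine ⟨dist x y, ⟨dist_nonneg, le_refl _⟩, ⟨dist_nonneg, le_refl _⟩, ?_⟩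
    show Metric.infDist (f (dist x y)) Gyz ≤ δ
    rw [hfL, Metric.infDist_zero_of_mem (geo_mem_left hGyz)]
    exact hδ
  have hBne : (Set.Icc (0 : ℝ) (dist x y) ∩ B).Nonempty := by
    refine ⟨0, ⟨le_refl 0, dist_nonneg⟩, ⟨le_refl 0, dist_nonneg⟩, ?_⟩
    show Metric.infDist (f 0) Gzx ≤ δ
    rw [hf0, Metric.infDist_zero_of_mem (geo_mem_right hGzx)]
    exact hδ
  obtain ⟨t₀, ht₀Icc, ht₀A, ht₀B⟩ :=
    (isPreconnected_closed_iff.mp isPreconnected_Icc) A B hAc hBc hcover hAne hBne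
  set m := f t₀ with hm_def
  have hmG : m ∈ Gxy := by rw [← himg]; exact ⟨t₀, ht₀Icc, rfl⟩
  have hmA : Metric.infDist m Gyz ≤ δ := ht₀A.2
  have hmB : Metric.infDist m Gzx ≤ δ := ht₀B.2
  -- the key estimates
  have E1 : dist y m + dist m z ≤ dist y z + 2 * δ := geo_estimate hGyz hmA
  have E2 : dist z m + dist m x ≤ dist z x + 2 * δ := geo_estimate hGzx hmB
  have C1 : dist x m + dist m y = dist x y := geo_dist_add hGxy' hmG
  have C2 : dist x p + dist p y = dist x y := geo_dist_add hGxy' hp.1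
  have ha_m : dist z p ≤ dist z m := by
    rw [hp.2]; exact Metric.infDist_le_dist_of_mem hmG
  have T1 : dist z x ≤ dist z p + dist p x := dist_triangle z p x
  have T2 : dist z y ≤ dist z p + dist p y := dist_triangle z p y
  -- normalize distances
  have c1 : dist y m = dist m y := dist_comm y m
  have c2 : dist m z = dist z m := dist_comm m z
  have c3 : dist y z = dist z y := dist_comm y z
  have c4 : dist m x = dist x m := dist_comm m x
  have c5 : dist p x = dist x p := dist_comm p x
  have c6 : dist y p = dist p y := dist_comm y p
  constructor
  · intro hz
    have hz' : dist z y ≤ dist z x := hz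
    rw [c6]
    linarith
  · intro h
    rw [c6] at h
    show dist z y ≤ dist z x
    linarith
end
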